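/- Let P = [a, b] ⊂ ℝ with a ∈ ℤ and b ∈ ℚ ∖ ℤ. Then the solid-angle sum A_P(t) (which equals the number of integers strictly between ta and tb, plus 1/2 for each endpoint ta, tb that is an integer) is a polynomial in the positive integer t if and only if b − ⌊b⌋ = 1/2. -/

import Mathlib

/-- The solid angle (in dimension 1) of a point `x` with respect to the interval `[a,b]`:
`1` on the open interval, `1/2` at the endpoints, `0` otherwise. -/
noncomputable def intervalAngle (a b x : ℝ) : ℝ :=
  if a < x ∧ x < b then 1 else if x = a ∨ x = b then 1 / 2 else 0

/-- The solid-angle sum `A_{[a,b]}(t) = Σ_{m ∈ ℤ} ω_{[ta,tb]}(m)`. -/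
noncomputable def intervalAngleSum (a b : ℝ) (t : ℕ) : ℝ :=
  ∑' m : ℤ, intervalAngle (t * a) (t * b) (m : ℝ)

/-!
Write `((x)) := x - (⌊x⌋ + ⌈x⌉) / 2` for the sawtooth function: `0` at integers and
`fract x - 1/2` elsewhere. The solid angle is the average of the indicators of the closed
and the open interval, so counting lattice points in both gives
`A_{[a,b]} = (b - a) - ((b)) + ((a))`, i.e. `A(t) = t (b - a) - ((t b))` when `a ∈ ℤ`.
The correction vanishes at the multiples of the denominator of `b`, so a polynomial agreeing
with `A` must be `t (b - a)`; then `((b)) = 0`, which for `b ∉ ℤ` means `fract b = 1/2`.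
Conversely, if `2 b ∈ ℤ` then `((t b)) = 0`, since `((·))` is odd and `1`-periodic.
-/

noncomputable def sawtooth (x : ℝ) : ℝ := x - (⌊x⌋ + ⌈x⌉) / 2

@[simp]
lemma sawtooth_intCast (n : ℤ) : sawtooth n = 0 := by simp [sawtooth]

lemma sawtooth_add_intCast (x : ℝ) (n : ℤ) : sawtooth (x + n) = sawtooth x := by
  simp only [sawtooth, Int.floor_add_intCast, Int.ceil_add_intCast]
  push_cast
  ring

lemma sawtooth_neg (x : ℝ) : sawtooth (-x) = -sawtooth x := by
  simp only [sawtooth, Int.floor_neg, Int.ceil_neg]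
  push_cast
  ring

lemma sawtooth_eq_fract_sub_half {x : ℝ} (hx : Int.fract x ≠ 0) :
    sawtooth x = Int.fract x - 1 / 2 := by
  rw [sawtooth, Int.ceil_eq_add_one_sub_fract hx, ← Int.self_sub_fract]
  ring

lemma sawtooth_eq_zero_of_two_mul_eq_intCast {x : ℝ} {n : ℤ} (hx : 2 * x = n) :
    sawtooth x = 0 := by
  have h : sawtooth x = -sawtooth x := by
    rw [← sawtooth_neg, ← sawtooth_add_intCast (-x) n, ← hx]
    ring_nf
  linarith

lemma sawtooth_eq_zero_iff {x : ℝ} (hx : Int.fract x ≠ 0) :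
    sawtooth x = 0 ↔ Int.fract x = 1 / 2 := by
  rw [sawtooth_eq_fract_sub_half hx, sub_eq_zero]

lemma sawtooth_natCast_mul_eq_zero {x : ℝ} (hx : Int.fract x = 1 / 2) (t : ℕ) :
    sawtooth (t * x) = 0 := by
  refine sawtooth_eq_zero_of_two_mul_eq_intCast (n := t * (2 * ⌊x⌋ + 1)) ?_
  push_cast
  linear_combination (-2 * t : ℝ) * Int.floor_add_fract x + (2 * t : ℝ) * hx

lemma hasSum_indicator_one_intCast {S : Set ℝ} {s : Finset ℤ}
    (hs : ∀ m : ℤ, (m : ℝ) ∈ S ↔ m ∈ s) :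
    HasSum (fun m : ℤ => S.indicator (1 : ℝ → ℝ) m) s.card := by
  have h : (fun m : ℤ => S.indicator (1 : ℝ → ℝ) m) = (s : Set ℤ).indicator 1 := by
    ext m
    simp only [Set.indicator, Finset.mem_coe, hs, Pi.one_apply]
  simpa [h] using hasSum_subtype_iff_indicator.1 (s.hasSum (1 : ℤ → ℝ))

lemma hasSum_indicator_one_Icc_intCast {a b : ℝ} (hab : a ≤ b) :
    HasSum (fun m : ℤ => (Set.Icc a b).indicator (1 : ℝ → ℝ) m)
      (⌊b⌋ + 1 - ⌈a⌉ : ℤ) := by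
  have hle : ⌈a⌉ ≤ ⌊b⌋ + 1 := by
    have := Int.ceil_le_floor_add_one a
    have := Int.floor_mono hab
    omega
  rw [← Int.card_Icc_of_le _ _ hle, Int.cast_natCast]
  exact hasSum_indicator_one_intCast fun m => by simp [Int.ceil_le, Int.le_floor]

lemma hasSum_indicator_one_Ioo_intCast {a b : ℝ} (hab : a < b) :
    HasSum (fun m : ℤ => (Set.Ioo a b).indicator (1 : ℝ → ℝ) m)
      (⌈b⌉ - ⌊a⌋ - 1 : ℤ) := by
  rw [← Int.card_Ioo_of_lt _ _ (Int.floor_lt_ceil_of_lt hab), Int.cast_natCast]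
  exact hasSum_indicator_one_intCast fun m => by simp [Int.floor_lt, Int.lt_ceil]

lemma intervalAngle_eq_indicator {a b : ℝ} (hab : a ≤ b) (x : ℝ) :
    intervalAngle a b x = ((Set.Icc a b).indicator 1 x + (Set.Ioo a b).indicator 1 x) / 2 := by
  simp only [intervalAngle, Set.indicator_apply, Set.mem_Icc, Set.mem_Ioo, Pi.one_apply]
  split_ifs <;> grind

lemma tsum_intervalAngle {a b : ℝ} (hab : a < b) :
    ∑' m : ℤ, intervalAngle a b m = b - a - sawtooth b + sawtooth a := by
  simp_rw [intervalAngle_eq_indicator hab.le]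
  rw [((hasSum_indicator_one_Icc_intCast hab.le).add
    (hasSum_indicator_one_Ioo_intCast hab)).div_const 2 |>.tsum_eq, sawtooth, sawtooth]
  push_cast
  ring

lemma intervalAngleSum_of_intCast_left {a : ℤ} {b : ℝ} (hab : (a : ℝ) < b) {t : ℕ}
    (ht : 0 < t) :
    intervalAngleSum a b t = t * (b - a) - sawtooth (t * b) := by
  have hlt : (t : ℝ) * a < t * b := by gcongr
  have hta : (t : ℝ) * a = (t * a : ℤ) := by push_cast; rfl
  rw [intervalAngleSum, tsum_intervalAngle hlt, hta, sawtooth_intCast]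
  push_cast
  ring

/-- For `P = [a,b]` with `a ∈ ℤ` and `b ∈ ℚ ∖ ℤ`, the solid-angle sum `A_P(t)` is a
polynomial in the positive integer `t` if and only if `b − ⌊b⌋ = 1/2`. -/
theorem intervalAngleSum_polynomial_iff (a : ℤ) (b : ℚ)
    (hb : ¬ ∃ z : ℤ, (z : ℚ) = b) (hab : (a : ℝ) < (b : ℝ)) :
    (∃ p : Polynomial ℝ, ∀ t : ℕ, 0 < t →
        intervalAngleSum (a : ℝ) (b : ℝ) t = p.eval (t : ℝ)) ↔
      Int.fract (b : ℝ) = 1 / 2 := by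
  have hfract : Int.fract (b : ℝ) ≠ 0 := by
    rw [Ne, Int.fract_eq_zero_iff]
    rintro ⟨z, hz⟩
    exact hb ⟨z, by exact_mod_cast hz⟩
  constructor
  · rintro ⟨p, hp⟩
    have hp_linear : p = .C ((b : ℝ) - a) * .X := by
      refine Polynomial.eq_of_infinite_eval_eq _ _ <| Set.infinite_of_injective_forall_mem
        (f := fun k : ℕ => (((k + 1) * b.den : ℕ) : ℝ)) (fun k l hkl => ?_) fun k => ?_
      · simpa using hkl
      · have ht : 0 < (k + 1) * b.den := Nat.mul_pos k.succ_pos b.den_pos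
        have htb : (((k + 1) * b.den : ℕ) : ℝ) * b = ((k + 1) * b.num : ℤ) := by
          push_cast
          rw [mul_assoc]
          exact_mod_cast congrArg ((k + 1 : ℚ) * ·) b.den_mul_eq_num
        show p.eval _ = (Polynomial.C _ * Polynomial.X).eval _
        rw [← hp _ ht, intervalAngleSum_of_intCast_left hab ht, htb, sawtooth_intCast]
        simp [mul_comm]
    rw [← sawtooth_eq_zero_iff hfract]
    have h1 := hp 1 one_pos
    rw [intervalAngleSum_of_intCast_left hab one_pos, hp_linear] at h1
    simpa using h1
  · intro hhalf
    refine ⟨.C ((b : ℝ) - a) * .X, fun t ht => ?_⟩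
    rw [intervalAngleSum_of_intCast_left hab ht, sawtooth_natCast_mul_eq_zero hhalf]
    simp [mul_comm]
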